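/- arXiv:2205.03506 — 2 statements merged into one kernel-verified Lean document; each statement's English description precedes it below -/
import Mathlib

section
/- Let d ≥ 2 and let X ⊆ 𝕋 be a nonempty compact set with m_d(X) = X. Then X is a rotation set for m_d (i.e. m_d|_X extends to a monotone degree-1 circle map) if and only if the complement 𝕋∖X contains d−1 pairwise disjoint open arcs, each of length 1/d. -/
open Set MeasureTheory ENNReal

noncomputable section

instance : Fact ((0:ℝ) < 1) := ⟨one_pos⟩

/-- The circle `ℝ/ℤ`. -/
abbrev Circle1 : Type := AddCircle (1 : ℝ)

/-- The multiplication-by-`d` map `m_d` on the circle. -/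
def md (d : ℕ) : Circle1 → Circle1 := fun t => d • t

/-- `G : ℝ → ℝ` (monotone, commuting with `x ↦ x + 1`) is a lift of the circle map `g`. -/
def IsLift (g : Circle1 → Circle1) (G : CircleDeg1Lift) : Prop :=
  ∀ x : ℝ, g ((x : ℝ) : Circle1) = ((G x : ℝ) : Circle1)

/-- `g` is a monotone degree-one circle map. -/
def IsMonotoneDeg1 (g : Circle1 → Circle1) : Prop :=
  ∃ G : CircleDeg1Lift, IsLift g G

/-- `ρ` is the rotation number of the monotone degree-one circle map `g`:
the residue class mod `ℤ` of the translation number of a lift of `g`. -/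
def HasRotationNumber (g : Circle1 → Circle1) (ρ : Circle1) : Prop :=
  ∃ G : CircleDeg1Lift, IsLift g G ∧ ρ = ((G.translationNumber : ℝ) : Circle1)

/-- `X` is a rotation set for `m_d`. -/
def IsRotationSet (d : ℕ) (X : Set Circle1) : Prop :=
  X.Nonempty ∧ IsCompact X ∧ md d '' X = X ∧
    ∃ g : Circle1 → Circle1, IsMonotoneDeg1 g ∧ ∀ t ∈ X, g t = md d t

/-- `X` is a rotation set for `m_d` with rotation number `ρ`. -/
def IsRotationSetWith (d : ℕ) (X : Set Circle1) (ρ : Circle1) : Prop :=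
  X.Nonempty ∧ IsCompact X ∧ md d '' X = X ∧
    ∃ g : Circle1 → Circle1, (∀ t ∈ X, g t = md d t) ∧ HasRotationNumber g ρ

/-- A gap of `X` is a connected component of the complement of `X`. -/
def IsGap (X : Set Circle1) (I : Set Circle1) : Prop :=
  ∃ t ∈ Xᶜ, I = connectedComponentIn Xᶜ t

/-- `C` is a periodic orbit (cycle) of `m_d`. -/
def IsPeriodicOrbit (d : ℕ) (C : Set Circle1) : Prop :=
  ∃ (t : Circle1) (n : ℕ), 0 < n ∧ (md d)^[n] t = t ∧
    C = Set.range (fun k : Fin n => (md d)^[(k : ℕ)] t)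

/-- The number of points of `X` whose representative in `[0,1)` lies in `[0,1/2)`. -/
def s1 (X : Set Circle1) : ℕ :=
  {t ∈ X | ((AddCircle.equivIco 1 0 t : ℝ) < 1 / 2)}.ncard


/-- An open arc of length `ℓ` in the circle: the image of an open interval of length `ℓ`. -/
def IsOpenArc (ℓ : ℝ) (A : Set Circle1) : Prop :=
  ∃ a : ℝ, A = (fun x : ℝ => ((x : ℝ) : Circle1)) '' Set.Ioo a (a + ℓ)

/-!
Let `G` be a lift agreeing with `x ↦ d * x` modulo `ℤ` on the preimage `Y ⊆ ℝ` of `X`. On `Y` the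
displacement `d * y - G y` is an integer, it grows by `d - 1` over a period, and since `G` is
monotone it can grow by `k` across a gap of `Y` only if the gap has length at least `k / d`. So
every unit of growth yields an interval of length `1 / d` free of `Y`; the one of level `n` starts
at the supremum of `(G y + n) / d` over the points `y ∈ Y` of displacement at most `n`.

Conversely, given the arcs, `d * x` minus `d` times the length of the arcs to the left of `x` has
slope `d` off the arcs and `0` on them: extended periodically, it is a monotone degree-one lift
that differs from `d * x` by an integer off the arcs.
-/

open Function

theorem coe_eq_coe_iff_exists_int {x y : ℝ} :
    (x : Circle1) = (y : Circle1) ↔ ∃ n : ℤ, x = y + n := by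
  rw [← sub_eq_zero, ← AddCircle.coe_sub, AddCircle.coe_eq_zero_iff]
  refine exists_congr fun n => ?_
  rw [zsmul_one]
  constructor <;> intro h <;> linarith

theorem extends_md_iff {g : Circle1 → Circle1} {G : CircleDeg1Lift} (hg : IsLift g G)
    (d : ℕ) (X : Set Circle1) :
    (∀ t ∈ X, g t = md d t) ↔ ∀ x : ℝ, (x : Circle1) ∈ X → ∃ n : ℤ, G x = d * x + n := by
  have key : ∀ x : ℝ, g x = md d x ↔ ∃ n : ℤ, G x = d * x + n := fun x => by
    rw [hg, md, ← AddCircle.coe_nsmul, nsmul_eq_mul, coe_eq_coe_iff_exists_int]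
  exact ⟨fun h x hx => (key x).1 (h x hx),
    fun h t ht => by
      obtain ⟨x, rfl⟩ := QuotientAddGroup.mk_surjective t
      exact (key x).2 (h x ht)⟩

theorem exists_isLift (G : CircleDeg1Lift) : ∃ g : Circle1 → Circle1, IsLift g G := by
  have hper : Periodic (fun x : ℝ => (G x : Circle1)) 1 := fun x => by
    simp only [G.map_add_one, AddCircle.coe_add, AddCircle.coe_period, add_zero]
  exact ⟨hper.lift, fun x => rfl⟩

theorem disjoint_coe_image_of_subset_Ico {s t : Set ℝ} {a : ℝ} (hs : s ⊆ Ico a (a + 1))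
    (ht : t ⊆ Ico a (a + 1)) (hst : Disjoint s t) :
    Disjoint ((↑) '' s : Set Circle1) ((↑) '' t) := by
  have hinj : InjOn ((↑) : ℝ → Circle1) (Ico a (a + 1)) :=
    fun x hx y hy h => (AddCircle.coe_eq_coe_iff_of_mem_Ico hx hy).1 h
  rw [disjoint_iff_inter_eq_empty, ← hinj.image_inter hs ht, hst.inter_eq, image_empty]

section ArcsOfLift

variable (G : CircleDeg1Lift) (d : ℕ) (Y : Set ℝ)

def levelSet (n : ℤ) : Set ℝ := {y ∈ Y | (d : ℝ) * y - G y ≤ n}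

/-- Writing `(G y + n) / d = y + (n - (d * y - G y)) / d`: the interval of level `n` starts this
far to the right of `y`. -/
def arcStart (n : ℤ) : ℝ := sSup ((fun y => (G y + n) / d) '' levelSet G d Y n)

variable {G d Y}

theorem le_of_mem_levelSet (hd : 0 < d) {n : ℤ} {y : ℝ} (hy : y ∈ levelSet G d Y n) :
    y ≤ (G y + n) / d := by
  rw [le_div_iff₀ (by positivity)]
  linarith [hy.2]

theorem levelSet_nonempty (hd : 2 ≤ d) (hY : ∀ y ∈ Y, y - 1 ∈ Y) (hne : Y.Nonempty)
    (n : ℤ) : (levelSet G d Y n).Nonempty := by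
  obtain ⟨y, hy⟩ := hne
  have hsub : ∀ m : ℕ, y - m ∈ Y := by
    intro m
    induction m with
    | zero => simpa using hy
    | succ m ih => simpa [sub_sub] using hY _ ih
  set m := ⌈(d : ℝ) * y - G y - n⌉₊
  refine ⟨y - m, hsub m, ?_⟩
  have hm : (d : ℝ) * y - G y - n ≤ m := Nat.le_ceil _
  have hd' : (1 : ℝ) ≤ d - 1 := by
    have : (2 : ℝ) ≤ d := by exact_mod_cast hd
    linarith
  have hm0 : (0 : ℝ) ≤ m := m.cast_nonneg
  rw [G.map_sub_nat]
  nlinarith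

theorem bddAbove_arcStart_image (hd : 2 ≤ d) (n : ℤ) :
    BddAbove ((fun y => (G y + n) / d) '' levelSet G d Y n) := by
  have hd' : (2 : ℝ) ≤ d := by exact_mod_cast hd
  set B : ℝ := G 0 + 1 + n
  refine ⟨(2 * |B|) / d, ?_⟩
  rintro _ ⟨y, hy, rfl⟩
  have hG : G y ≤ G 0 + y + 1 :=
    (G.map_le_of_map_zero y).trans (by linarith [Int.ceil_lt_add_one y])
  have hlev := hy.2
  have hyB : y ≤ |B| := by
    by_contra! h
    have hy0 : 0 < y := (abs_nonneg B).trans_lt h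
    nlinarith [le_abs_self B]
  exact div_le_div_of_nonneg_right (by linarith [le_abs_self B]) (by positivity)

theorem le_arcStart (hd : 2 ≤ d) {n : ℤ} {y : ℝ} (hy : y ∈ levelSet G d Y n) :
    (G y + n) / d ≤ arcStart G d Y n :=
  le_csSup (bddAbove_arcStart_image hd n) ⟨y, hy, rfl⟩

theorem arcStart_le {n : ℤ} (hne : (levelSet G d Y n).Nonempty) {b : ℝ}
    (hb : ∀ y ∈ levelSet G d Y n, (G y + n) / d ≤ b) : arcStart G d Y n ≤ b :=
  csSup_le (hne.image _) (forall_mem_image.2 hb)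

theorem arcStart_not_mem (hd : 2 ≤ d) (hint : ∀ y ∈ Y, ∃ k : ℤ, (d : ℝ) * y - G y = k)
    {n : ℤ} (hne : (levelSet G d Y n).Nonempty) {z : ℝ} (hz : z ∈ Y) :
    z ∉ Ioo (arcStart G d Y n) (arcStart G d Y n + 1 / d) := by
  rintro ⟨hlo, hhi⟩
  have hd0 : (0 : ℝ) < d := by positivity
  obtain ⟨k, hk⟩ := hint z hz
  rcases le_or_gt k n with hkn | hkn
  · have hzn : z ∈ levelSet G d Y n := ⟨hz, by rw [hk]; exact_mod_cast hkn⟩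
    linarith [le_of_mem_levelSet (by omega) hzn, le_arcStart hd hzn]
  · have hkn' : (n : ℝ) + 1 ≤ k := by exact_mod_cast hkn
    suffices arcStart G d Y n ≤ z - 1 / d by linarith
    refine arcStart_le hne fun y hy => ?_
    have hyz : y ≤ z := ((le_of_mem_levelSet (by omega) hy).trans (le_arcStart hd hy)).trans hlo.le
    rw [div_le_iff₀ hd0, sub_mul, div_mul_cancel₀ _ hd0.ne']
    linarith [G.mono hyz, hk]

theorem arcStart_add_nat (hd : 2 ≤ d) (hY : ∀ y ∈ Y, y - 1 ∈ Y) (hne : Y.Nonempty)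
    (n : ℤ) (k : ℕ) : arcStart G d Y n + k / d ≤ arcStart G d Y (n + k) := by
  induction k with
  | zero => simp
  | succ k ih =>
    have hstep : arcStart G d Y (n + k) ≤ arcStart G d Y (n + k + 1) - 1 / d := by
      refine arcStart_le (levelSet_nonempty hd hY hne _) fun y hy => ?_
      have hy' : y ∈ levelSet G d Y (n + k + 1) := by
        refine ⟨hy.1, ?_⟩
        have := hy.2
        push_cast at this ⊢
        linarith
      have := le_arcStart hd hy'
      push_cast at this ⊢
      rw [le_sub_iff_add_le, ← add_div, add_assoc]
      exact this
    have hidx : n + ((k + 1 : ℕ) : ℤ) = n + k + 1 := by push_cast; ring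
    rw [hidx, Nat.cast_succ, add_div]
    linarith

theorem arcStart_add_le (hd : 2 ≤ d) (hY : ∀ y ∈ Y, y - 1 ∈ Y) (hne : Y.Nonempty) (n : ℤ) :
    arcStart G d Y (n + (d - 1 : ℕ)) ≤ arcStart G d Y n + 1 := by
  have hd0 : (0 : ℝ) < d := by positivity
  have hcast : (((d - 1 : ℕ) : ℤ) : ℝ) = d - 1 := by
    rw [Int.cast_natCast, Nat.cast_sub (by omega), Nat.cast_one]
  refine arcStart_le (levelSet_nonempty hd hY hne _) fun y hy => ?_
  have hG : G (y - 1) = G y - 1 := by simpa using G.map_sub_nat y 1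
  have hy' : y - 1 ∈ levelSet G d Y n := by
    refine ⟨hY y hy.1, ?_⟩
    have := hy.2
    rw [Int.cast_add, hcast] at this
    rw [hG]
    linarith
  have hval : (G y + ((n + (d - 1 : ℕ) : ℤ) : ℝ)) / d = (G (y - 1) + n) / d + 1 := by
    rw [hG, Int.cast_add, hcast]
    field_simp
    ring
  linarith [le_arcStart hd hy']

theorem arcStart_add_le_of_lt (hd : 2 ≤ d) (hY : ∀ y ∈ Y, y - 1 ∈ Y) (hne : Y.Nonempty)
    {i j : ℕ} (hij : i < j) : arcStart G d Y i + 1 / d ≤ arcStart G d Y j := by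
  have h := arcStart_add_nat (G := G) hd hY hne i (j - i)
  rw [← Nat.cast_add, Nat.add_sub_cancel' hij.le, Nat.cast_sub hij.le] at h
  have : (1 : ℝ) / d ≤ ((j : ℝ) - i) / d := by
    gcongr
    have : (i : ℝ) + 1 ≤ j := by exact_mod_cast hij
    linarith
  linarith

end ArcsOfLift

theorem exists_disjoint_arcs_of_lift {d : ℕ} (hd : 2 ≤ d) {X : Set Circle1} (hX : X.Nonempty)
    {G : CircleDeg1Lift} (hG : ∀ x : ℝ, (x : Circle1) ∈ X → ∃ n : ℤ, G x = d * x + n) :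
    ∃ A : Fin (d - 1) → Set Circle1,
      (∀ i, IsOpenArc (1 / (d : ℝ)) (A i) ∧ A i ⊆ Xᶜ) ∧
        (∀ i j, i ≠ j → Disjoint (A i) (A j)) := by
  set Y : Set ℝ := (↑) ⁻¹' X
  have hY : ∀ y ∈ Y, y - 1 ∈ Y := fun y hy => by
    rwa [mem_preimage, AddCircle.coe_sub, AddCircle.coe_period, sub_zero]
  have hYne : Y.Nonempty := by
    obtain ⟨t, ht⟩ := hX
    obtain ⟨x, rfl⟩ := QuotientAddGroup.mk_surjective t
    exact ⟨x, ht⟩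
  have hint : ∀ y ∈ Y, ∃ k : ℤ, (d : ℝ) * y - G y = k := fun y hy => by
    obtain ⟨n, hn⟩ := hG y hy
    exact ⟨-n, by rw [hn]; push_cast; ring⟩
  set s : ℕ → ℝ := fun i => arcStart G d Y i
  have hsep : ∀ i j : ℕ, i < j → s i + 1 / d ≤ s j := fun i j =>
    arcStart_add_le_of_lt hd hY hYne
  have hwin : ∀ i : ℕ, i < d - 1 → Ioo (s i) (s i + 1 / d) ⊆ Ico (s 0) (s 0 + 1) := by
    intro i hi x hx
    have h0 : s 0 ≤ s i := by
      rcases Nat.eq_zero_or_pos i with rfl | h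
      · exact le_rfl
      · linarith [hsep 0 i h, show (0 : ℝ) ≤ 1 / d by positivity]
    have h1 : s (d - 1) ≤ s 0 + 1 := by simpa [s] using arcStart_add_le (G := G) hd hY hYne 0
    exact ⟨h0.trans hx.1.le, by linarith [hx.2, hsep i (d - 1) hi]⟩
  refine ⟨fun i => (↑) '' Ioo (s i) (s i + 1 / d), fun i => ⟨⟨s i, rfl⟩, ?_⟩, fun i j hij => ?_⟩
  · rintro _ ⟨z, hz, rfl⟩ hzX
    exact arcStart_not_mem hd hint (levelSet_nonempty hd hY hYne _) hzX hz
  · refine disjoint_coe_image_of_subset_Ico (hwin i i.2) (hwin j j.2) ?_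
    rw [Set.disjoint_left]
    rintro x ⟨hi1, hi2⟩ ⟨hj1, hj2⟩
    rcases lt_or_gt_of_ne (Fin.val_ne_of_ne hij) with h | h <;> linarith [hsep _ _ h]

section PeriodicExtension

variable (H : ℝ → ℝ) (p : ℝ)

def periodicExtend (x : ℝ) : ℝ := ⌊x - p⌋ + H (p + Int.fract (x - p))

theorem periodicExtend_add_one (x : ℝ) :
    periodicExtend H p (x + 1) = periodicExtend H p x + 1 := by
  simp only [periodicExtend, add_sub_right_comm x 1 p, Int.floor_add_one, Int.fract_add_one]
  push_cast
  ring

variable {H p}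

theorem monotone_periodicExtend (hH : MonotoneOn H (Icc p (p + 1))) (h1 : H (p + 1) = H p + 1) :
    Monotone (periodicExtend H p) := by
  intro x y hxy
  have mem : ∀ z, p + Int.fract (z - p) ∈ Icc p (p + 1) := fun z =>
    ⟨by linarith [Int.fract_nonneg (z - p)], by linarith [Int.fract_lt_one (z - p)]⟩
  rcases (Int.floor_mono (sub_le_sub_right hxy p)).eq_or_lt with heq | hlt
  · have hfr : p + Int.fract (x - p) ≤ p + Int.fract (y - p) := by
      rw [Int.fract, Int.fract, heq]
      linarith
    simp only [periodicExtend, heq]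
    linarith [hH (mem x) (mem y) hfr]
  · have hfl : (⌊x - p⌋ : ℝ) + 1 ≤ ⌊y - p⌋ := by exact_mod_cast hlt
    have hx : H (p + Int.fract (x - p)) ≤ H (p + 1) := hH (mem x) ⟨by linarith, le_rfl⟩ (mem x).2
    have hy : H p ≤ H (p + Int.fract (y - p)) := hH ⟨le_rfl, by linarith⟩ (mem y) (mem y).1
    simp only [periodicExtend]
    linarith

end PeriodicExtension

def lengthBelow (a c t : ℝ) : ℝ := min c (max 0 (t - a))

theorem lengthBelow_sub_lengthBelow {a c x y : ℝ} (hc : 0 ≤ c) (hxy : x ≤ y) :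
    lengthBelow a c y - lengthBelow a c x = volume.real (Ioo x y ∩ Ioo a (a + c)) := by
  rw [Ioo_inter_Ioo, Real.volume_real_Ioo]
  simp only [lengthBelow, max_def, min_def]
  split_ifs <;> linarith

theorem lengthBelow_eq_zero_or_eq {a c t : ℝ} (hc : 0 ≤ c) (ht : t ∉ Ioo a (a + c)) :
    lengthBelow a c t = 0 ∨ lengthBelow a c t = c := by
  simp only [mem_Ioo, not_and_or, not_lt] at ht
  rcases ht with h | h
  · exact .inl (by rw [lengthBelow, max_eq_left (by linarith), min_eq_right hc])
  · exact .inr (by rw [lengthBelow, max_eq_right (by linarith), min_eq_left (by linarith)])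

theorem sum_lengthBelow_sub_le {ι : Type*} [Fintype ι] {a : ι → ℝ} {c x y : ℝ} (hc : 0 ≤ c)
    (hdisj : Pairwise (Disjoint on fun i => Ioo (a i) (a i + c))) (hxy : x ≤ y) :
    ∑ i, (lengthBelow (a i) c y - lengthBelow (a i) c x) ≤ y - x := by
  simp_rw [lengthBelow_sub_lengthBelow hc hxy]
  rw [← measureReal_biUnion_finset (fun i _ j _ hij =>
      (hdisj hij).mono inter_subset_right inter_subset_right)
    (fun i _ => measurableSet_Ioo.inter measurableSet_Ioo)
    (fun i _ => ((measure_mono inter_subset_left).trans_lt measure_Ioo_lt_top).ne),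
    ← Real.volume_real_Ioo_of_le hxy]
  exact measureReal_mono (iUnion₂_subset fun i _ => inter_subset_left) measure_Ioo_lt_top.ne

theorem exists_lift_of_disjoint_Ioo {ι : Type*} [Fintype ι] {d : ℕ}
    (hcard : Fintype.card ι + 1 = d) {p : ℝ} {α : ι → ℝ}
    (hα : ∀ i, p ≤ α i ∧ α i + 1 / d ≤ p + 1)
    (hdisj : Pairwise (Disjoint on fun i => Ioo (α i) (α i + 1 / d))) :
    ∃ G : CircleDeg1Lift, ∀ x : ℝ, (∀ i, (x : Circle1) ∉ (↑) '' Ioo (α i) (α i + 1 / d)) →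
      ∃ n : ℤ, G x = d * x + n := by
  have hd0 : (0 : ℝ) < d := by rw [← hcard]; positivity
  have hc : (0 : ℝ) ≤ 1 / d := by positivity
  set H : ℝ → ℝ := fun t => d * t - d * ∑ i, lengthBelow (α i) (1 / d) t
  have hHmono : Monotone H := fun x y hxy => by
    have := sum_lengthBelow_sub_le hc hdisj hxy
    rw [Finset.sum_sub_distrib] at this
    simp only [H]
    nlinarith
  have hH1 : H (p + 1) = H p + 1 := by
    have h0 : ∀ i, lengthBelow (α i) (1 / d) p = 0 := fun i => by
      rw [lengthBelow, max_eq_left (by linarith [hα i]), min_eq_right hc]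
    have h1 : ∀ i, lengthBelow (α i) (1 / d) (p + 1) = 1 / d := fun i => by
      rw [lengthBelow, max_eq_right (by linarith [hα i]), min_eq_left (by linarith [hα i])]
    have hcard' : (Fintype.card ι : ℝ) = d - 1 := by rw [← hcard]; push_cast; ring
    simp only [H, h0, h1, Finset.sum_const_zero, Finset.sum_const, Finset.card_univ,
      nsmul_eq_mul, hcard']
    field_simp
    ring
  refine ⟨⟨⟨periodicExtend H p, monotone_periodicExtend (hHmono.monotoneOn _) hH1⟩,
    periodicExtend_add_one H p⟩, fun x hx => ?_⟩
  set t := p + Int.fract (x - p)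
  have hint : ∀ i, ∃ k : ℤ, d * lengthBelow (α i) (1 / d) t = k := fun i => by
    have hti : t ∉ Ioo (α i) (α i + 1 / d) := fun h => hx i ⟨t, h, by
      rw [coe_eq_coe_iff_exists_int]
      exact ⟨-⌊x - p⌋, by simp only [t, Int.fract]; push_cast; ring⟩⟩
    rcases lengthBelow_eq_zero_or_eq hc hti with h | h
    · exact ⟨0, by rw [h, mul_zero, Int.cast_zero]⟩
    · exact ⟨1, by rw [h, mul_one_div_cancel hd0.ne', Int.cast_one]⟩
  choose k hk using hint
  refine ⟨(1 - d) * ⌊x - p⌋ - ∑ i, k i, ?_⟩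
  have ht : t = x - ⌊x - p⌋ := by simp only [t, Int.fract]; ring
  show (⌊x - p⌋ : ℝ) + (d * t - d * ∑ i, lengthBelow (α i) (1 / d) t) = _
  rw [Finset.mul_sum, Finset.sum_congr rfl fun i _ => hk i, ht]
  push_cast
  ring

theorem IsOpenArc.exists_eq_image_Ioo {ℓ : ℝ} {A : Set Circle1} (hA : IsOpenArc ℓ A) {p : ℝ}
    (hp : (p : Circle1) ∉ A) :
    ∃ α : ℝ, A = (↑) '' Ioo α (α + ℓ) ∧ p ≤ α ∧ α + ℓ ≤ p + 1 := by
  obtain ⟨a, rfl⟩ := hA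
  set α := p + Int.fract (a - p)
  have hshift : ((↑) '' Ioo α (α + ℓ) : Set Circle1) = (↑) '' Ioo a (a + ℓ) := by
    have hα : α = a - ⌊a - p⌋ := by simp only [α, Int.fract]; ring
    rw [hα, sub_add_eq_add_sub, ← image_sub_const_Ioo, image_image]
    congr! 1 with x
    rw [AddCircle.coe_sub, sub_eq_self, AddCircle.coe_eq_zero_iff]
    exact ⟨⌊a - p⌋, zsmul_one _⟩
  refine ⟨α, hshift.symm, by linarith [Int.fract_nonneg (a - p)], ?_⟩
  by_contra! h
  rw [← hshift] at hp
  refine hp ⟨p + 1, ⟨by linarith [Int.fract_lt_one (a - p)], h⟩, ?_⟩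
  rw [AddCircle.coe_add, AddCircle.coe_period, add_zero]

theorem exists_lift_of_disjoint_arcs {d : ℕ} (hd : 0 < d) {X : Set Circle1} (hX : X.Nonempty)
    {A : Fin (d - 1) → Set Circle1} (hA : ∀ i, IsOpenArc (1 / (d : ℝ)) (A i) ∧ A i ⊆ Xᶜ)
    (hdisj : ∀ i j, i ≠ j → Disjoint (A i) (A j)) :
    ∃ G : CircleDeg1Lift, ∀ x : ℝ, (x : Circle1) ∈ X → ∃ n : ℤ, G x = d * x + n := by
  obtain ⟨t, hp⟩ := hX
  obtain ⟨p, rfl⟩ := QuotientAddGroup.mk_surjective t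
  choose α hαA hα using fun i => (hA i).1.exists_eq_image_Ioo fun h => (hA i).2 h hp
  obtain ⟨G, hG⟩ := exists_lift_of_disjoint_Ioo (by rw [Fintype.card_fin]; omega) hα
    fun i j hij => Disjoint.of_image (f := ((↑) : ℝ → Circle1)) (hαA i ▸ hαA j ▸ hdisj i j hij)
  exact ⟨G, fun x hx => hG x fun i hxi => (hA i).2 (hαA i ▸ hxi) hx⟩

theorem rotation_set_iff_disjoint_arcs_general
    (d : ℕ) (hd : 2 ≤ d) (X : Set Circle1)
    (hX : X.Nonempty) :
    (∃ g : Circle1 → Circle1, IsMonotoneDeg1 g ∧ ∀ t ∈ X, g t = md d t) ↔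
      ∃ A : Fin (d - 1) → Set Circle1,
        (∀ i, IsOpenArc (1 / (d : ℝ)) (A i) ∧ A i ⊆ Xᶜ) ∧
        (∀ i j, i ≠ j → Disjoint (A i) (A j)) := by
  constructor
  · rintro ⟨g, ⟨G, hG⟩, hgX⟩
    exact exists_disjoint_arcs_of_lift hd hX ((extends_md_iff hG d X).1 hgX)
  · rintro ⟨A, hA, hdisj⟩
    obtain ⟨G, hGX⟩ := exists_lift_of_disjoint_arcs (by omega) hX hA hdisj
    obtain ⟨g, hg⟩ := exists_isLift G
    exact ⟨g, ⟨G, hg⟩, (extends_md_iff hg d X).2 hGX⟩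

/-- A nonempty compact `m_d`-invariant set is a rotation set if and only
if its complement contains `d - 1` pairwise disjoint open arcs, each of length `1/d`. -/
theorem rotation_set_iff_disjoint_arcs
    (d : ℕ) (hd : 2 ≤ d) (X : Set Circle1)
    (hX : X.Nonempty) (hXc : IsCompact X) (hXinv : md d '' X = X) :
    (∃ g : Circle1 → Circle1, IsMonotoneDeg1 g ∧ ∀ t ∈ X, g t = md d t) ↔
      ∃ A : Fin (d - 1) → Set Circle1,
        (∀ i, IsOpenArc (1 / (d : ℝ)) (A i) ∧ A i ⊆ Xᶜ) ∧
        (∀ i j, i ≠ j → Disjoint (A i) (A j)) :=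
  rotation_set_iff_disjoint_arcs_general d hd X hX
end
end

section
/- A rotation set for m_3 contains at most two distinct periodic orbits of m_3: if X ⊆ 𝕋 is a rotation set for m_3 and C₁, C₂, C₃ ⊆ X are periodic orbits of m_3, then C₁, C₂, C₃ are not pairwise distinct. -/
open Set MeasureTheory ENNReal

noncomputable section

/-!
Let `Y` be the union of the cycles and enumerate its lifts increasingly as `x : ℤ → ℝ`, so that
`x (i + N) = x i + 1`. A monotone degree-one map agreeing with `m_d` on `Y`, which `m_d` permutes,
acts on this enumeration as a shift `i ↦ i + k`, so the defect `w i = d * x i - x (i + k)` is an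
integer. The jump `w (i + 1) - w i` counts the full turns by which `m_d` overshoots when it
stretches the gap `(x i, x (i + 1))` onto the gap `(x (i + k), x (i + k + 1))`; it is nonnegative,
and over one period the jumps add up to `d - 1`. Along a cycle on which no gap overshoots, `m_d`
would multiply gap lengths by `d` forever, which periodicity forbids. So each cycle carries a
positive jump, and there are at most `d - 1` cycles.
-/

theorem StrictMono.int_eq_add_of_surjective {σ : ℤ → ℤ} (hσ : StrictMono σ)
    (hsurj : Function.Surjective σ) (i : ℤ) : σ i = i + σ 0 := by
  have hstep : ∀ i, σ (i + 1) = σ i + 1 := by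
    intro i
    obtain ⟨j, hj⟩ := hsurj (σ i + 1)
    have hij : i < j := hσ.lt_iff_lt.mp (by omega)
    have := hσ.monotone (show i + 1 ≤ j by omega)
    have := hσ (lt_add_one i)
    omega
  induction i using Int.induction_on with
  | zero => simp
  | succ m hm => rw [hstep, hm]; ring
  | pred m hm => have := hstep (-(m : ℤ) - 1); simp only [sub_add_cancel] at this; omega

theorem Function.Periodic.exists_natCast_lt {P : ℤ → Prop} {N : ℕ} (hP : Function.Periodic P N)
    (hN : 0 < N) {i : ℤ} (hi : P i) : ∃ j : ℕ, j < N ∧ P j := by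
  have h0 : 0 ≤ i % N := Int.emod_nonneg _ (by omega)
  have hlt : i % N < N := Int.emod_lt_of_pos _ (by omega)
  refine ⟨(i % N).toNat, by omega, ?_⟩
  have hmod := hP.sub_zsmul_eq (i / N) (x := i)
  rw [smul_eq_mul, mul_comm, ← Int.emod_def] at hmod
  rwa [Int.toNat_of_nonneg h0, hmod]

theorem exists_strictMono_int_range_eq {α : Type*} [LinearOrder α] {s : Set α}
    (hne : s.Nonempty) (hmax : ∀ a ∈ s, ∃ b ∈ s, a < b) (hmin : ∀ a ∈ s, ∃ b ∈ s, b < a)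
    (hfin : ∀ a b, (s ∩ Icc a b).Finite) : ∃ x : ℤ → α, StrictMono x ∧ range x = s := by
  let : LocallyFiniteOrder s := .ofFiniteIcc fun a b =>
    ((hfin a b).preimage Subtype.val_injective.injOn).subset fun y hy => ⟨y.2, hy⟩
  let : SuccOrder s := LinearLocallyFiniteOrder.succOrder s
  let : PredOrder s := LinearLocallyFiniteOrder.predOrder s
  have : NoMaxOrder s := ⟨fun a => let ⟨b, hb, hab⟩ := hmax a a.2; ⟨⟨b, hb⟩, hab⟩⟩
  have : NoMinOrder s := ⟨fun a => let ⟨b, hb, hab⟩ := hmin a a.2; ⟨⟨b, hb⟩, hab⟩⟩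
  have : Nonempty s := hne.to_subtype
  let e : s ≃o ℤ := orderIsoIntOfLinearSuccPredArch
  exact ⟨Subtype.val ∘ e.symm, (Subtype.strictMono_coe _).comp e.symm.strictMono,
    by rw [e.symm.surjective.range_comp, Subtype.range_coe]⟩

theorem circle_coe_eq_coe_iff {a b : ℝ} : (a : Circle1) = b ↔ ∃ z : ℤ, b = a + z := by
  rw [eq_comm, ← sub_eq_zero, ← AddCircle.coe_sub, AddCircle.coe_eq_zero_iff]
  simp only [zsmul_eq_mul, mul_one, eq_comm (a := (_ : ℝ)), sub_eq_iff_eq_add', add_comm a]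

theorem circle_coe_add_int (a : ℝ) (z : ℤ) : ((a + z : ℝ) : Circle1) = a :=
  (circle_coe_eq_coe_iff.mpr ⟨z, rfl⟩).symm

theorem md_coe (d : ℕ) (a : ℝ) : md d a = ((d * a : ℝ) : Circle1) := by
  rw [md, ← nsmul_eq_mul, AddCircle.coe_nsmul]

theorem finite_preimage_coe_inter_Icc {Y : Set Circle1} (hY : Y.Finite) (a b : ℝ) :
    ((↑) ⁻¹' Y ∩ Icc a b : Set ℝ).Finite := by
  have hfibres : ((↑) ⁻¹' Y ∩ Icc a b : Set ℝ) ⊆ ⋃ y ∈ Y, ((↑) ⁻¹' {y} ∩ Icc a b) :=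
    fun s hs => mem_biUnion (x := (s : Circle1)) hs.1 ⟨rfl, hs.2⟩
  refine (hY.biUnion fun y _ => ?_).subset hfibres
  obtain ⟨r, rfl⟩ := QuotientAddGroup.mk_surjective y
  refine ((finite_Icc ⌈a - r⌉ ⌊b - r⌋).image fun z : ℤ => r + z).subset ?_
  rintro s ⟨hs, has, hsb⟩
  obtain ⟨z, rfl⟩ := circle_coe_eq_coe_iff.mp hs.symm
  exact ⟨z, ⟨Int.ceil_le.mpr (by linarith), Int.le_floor.mpr (by linarith)⟩, rfl⟩

structure IsLiftEnumeration (Y : Set Circle1) (N : ℕ) (x : ℤ → ℝ) : Prop where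
  strictMono : StrictMono x
  add_period : ∀ i, x (i + N) = x i + 1
  range_eq : range x = (↑) ⁻¹' Y

theorem exists_isLiftEnumeration {Y : Set Circle1} (hY : Y.Finite) (hne : Y.Nonempty) :
    ∃ N x, IsLiftEnumeration Y N x := by
  have hadd : ∀ (y : ℝ) (z : ℤ), y + z ∈ ((↑) ⁻¹' Y : Set ℝ) ↔ y ∈ ((↑) ⁻¹' Y : Set ℝ) :=
    fun y z => by rw [mem_preimage, circle_coe_add_int, mem_preimage]
  obtain ⟨x, hx, hrange⟩ := exists_strictMono_int_range_eq
    (QuotientAddGroup.mk_surjective.nonempty_preimage.mpr hne)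
    (fun a ha => ⟨a + (1 : ℤ), (hadd a 1).mpr ha, by simp⟩)
    (fun a ha => ⟨a + (-1 : ℤ), (hadd a (-1)).mpr ha, by simp⟩)
    (finite_preimage_coe_inter_Icc hY)
  have hsucc : ∀ i, ∃ j, x j = x i + 1 := fun i => by
    rw [← mem_range, hrange, show x i + 1 = x i + (1 : ℤ) by simp, hadd, ← hrange]
    exact mem_range_self i
  choose τ hτ using hsucc
  have hτmono : StrictMono τ := fun i j hij => hx.lt_iff_lt.mp (by simpa [hτ] using hx hij)
  have hτsurj : Function.Surjective τ := fun j => by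
    obtain ⟨i, hi⟩ : x j - 1 ∈ range x := by
      rw [hrange, show x j - 1 = x j + (-1 : ℤ) by push_cast; ring, hadd, ← hrange]
      exact mem_range_self j
    exact ⟨i, hx.injective (by rw [hτ, hi, sub_add_cancel])⟩
  have hτ0 : 0 < τ 0 := hx.lt_iff_lt.mp (by rw [hτ]; linarith)
  lift τ 0 to ℕ using hτ0.le with N hN
  refine ⟨N, x, hx, fun i => ?_, hrange⟩
  rw [← hτ, hτmono.int_eq_add_of_surjective hτsurj, hN]

namespace IsLiftEnumeration

variable {Y : Set Circle1} {N : ℕ} {x : ℤ → ℝ}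

theorem period_pos (hx : IsLiftEnumeration Y N x) : 0 < N := by
  by_contra! h
  have := hx.add_period 0
  simp_all

theorem coe_mem (hx : IsLiftEnumeration Y N x) (i : ℤ) : ((x i : ℝ) : Circle1) ∈ Y := by
  rw [← mem_preimage, ← hx.range_eq]
  exact mem_range_self i

theorem exists_eq (hx : IsLiftEnumeration Y N x) {y : ℝ} (hy : (y : Circle1) ∈ Y) :
    ∃ i, x i = y := by
  rwa [← mem_range, hx.range_eq]

theorem periodic_coe (hx : IsLiftEnumeration Y N x) :
    Function.Periodic (fun i => ((x i : ℝ) : Circle1)) N := fun i => by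
  simp only [hx.add_period, ← Int.cast_one (R := ℝ), circle_coe_add_int]

theorem periodic_gap (hx : IsLiftEnumeration Y N x) :
    Function.Periodic (fun i => x (i + 1) - x i) N := fun i => by
  dsimp only
  rw [add_right_comm, hx.add_period, hx.add_period, add_sub_add_right_eq_sub]

theorem gap_pos (hx : IsLiftEnumeration Y N x) (i : ℤ) : 0 < x (i + 1) - x i :=
  sub_pos.mpr (hx.strictMono (lt_add_one i))

theorem gap_le_one (hx : IsLiftEnumeration Y N x) (i : ℤ) : x (i + 1) - x i ≤ 1 := by
  have := hx.strictMono.monotone (show i + 1 ≤ i + N by linarith [hx.period_pos])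
  linarith [hx.add_period i]

theorem exists_shift (hx : IsLiftEnumeration Y N x) {g : Circle1 → Circle1}
    {G : CircleDeg1Lift} (hG : IsLift g G) (hg : BijOn g Y Y) :
    ∃ k, ∀ i, G (x i) = x (i + k) := by
  have hmem : ∀ i, G (x i) ∈ range x := fun i => by
    rw [hx.range_eq, mem_preimage, ← hG]
    exact hg.mapsTo (hx.coe_mem i)
  choose σ hσ using hmem
  have hσinj : Function.Injective σ := fun i j hij => by
    have hcoe : ((x i : ℝ) : Circle1) = x j :=
      hg.injOn (hx.coe_mem i) (hx.coe_mem j) (by rw [hG, hG, ← hσ, ← hσ, hij])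
    obtain ⟨z, hz⟩ := circle_coe_eq_coe_iff.mp hcoe
    have hGz : G (x j) = G (x i) + z := by rw [hz, G.map_add_int]
    rw [← hσ, ← hσ, hij, left_eq_add, Int.cast_eq_zero] at hGz
    exact hx.strictMono.injective (by rw [hz, hGz, Int.cast_zero, add_zero])
  have hσmono : Monotone σ := fun i j hij => hx.strictMono.le_iff_le.mp <| by
    rw [hσ, hσ]
    exact G.monotone (hx.strictMono.monotone hij)
  have hσsurj : Function.Surjective σ := fun j => by
    obtain ⟨t, ht, hgt⟩ := hg.surjOn (hx.coe_mem j)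
    obtain ⟨r, rfl⟩ := QuotientAddGroup.mk_surjective t
    obtain ⟨z, hz⟩ := circle_coe_eq_coe_iff.mp ((hG r).symm.trans hgt)
    obtain ⟨i, hi⟩ := hx.exists_eq (y := r + z) (by rwa [circle_coe_add_int])
    exact ⟨i, hx.strictMono.injective (by rw [hσ, hi, G.map_add_int, hz])⟩
  refine ⟨σ 0, fun i => ?_⟩
  rw [← hσ, (hσmono.strictMono_of_injective hσinj).int_eq_add_of_surjective hσsurj, add_comm]

end IsLiftEnumeration

section Jumps

variable {Y : Set Circle1} {N : ℕ} {x : ℤ → ℝ} {d : ℕ} {k : ℤ} {w : ℤ → ℤ}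

theorem coe_add_shift (hw : ∀ i, (d : ℝ) * x i = x (i + k) + w i) (i : ℤ) :
    ((x (i + k) : ℝ) : Circle1) = md d (x i) := by
  rw [md_coe, hw, circle_coe_add_int]

theorem jump_eq (hw : ∀ i, (d : ℝ) * x i = x (i + k) + w i) (i : ℤ) :
    ((w (i + 1) - w i : ℤ) : ℝ) = d * (x (i + 1) - x i) - (x (i + k + 1) - x (i + k)) := by
  push_cast
  rw [add_right_comm]
  linarith [hw i, hw (i + 1)]

theorem IsLiftEnumeration.defect_add_period (hx : IsLiftEnumeration Y N x)
    (hw : ∀ i, (d : ℝ) * x i = x (i + k) + w i) (i : ℤ) : w (i + N) = w i + (d - 1) := by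
  have h := hw (i + N)
  rw [hx.add_period, add_right_comm, hx.add_period] at h
  exact_mod_cast (by linarith [hw i] : (w (i + N) : ℝ) = w i + (d - 1))

theorem IsLiftEnumeration.periodic_jump (hx : IsLiftEnumeration Y N x)
    (hw : ∀ i, (d : ℝ) * x i = x (i + k) + w i) :
    Function.Periodic (fun i => w (i + 1) - w i) N := fun i => by
  dsimp only
  rw [add_right_comm, hx.defect_add_period hw, hx.defect_add_period hw]
  ring

theorem IsLiftEnumeration.jump_nonneg (hx : IsLiftEnumeration Y N x)
    (hw : ∀ i, (d : ℝ) * x i = x (i + k) + w i) (hd : 0 < d) (i : ℤ) :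
    0 ≤ w (i + 1) - w i := by
  have hgt : (-1 : ℝ) < ((w (i + 1) - w i : ℤ) : ℝ) := by
    have : (0 : ℝ) < d := by exact_mod_cast hd
    rw [jump_eq hw]
    nlinarith [hx.gap_pos i, hx.gap_le_one (i + k)]
  have : (-1 : ℤ) < w (i + 1) - w i := by exact_mod_cast hgt
  omega

theorem IsLiftEnumeration.sum_range_jump (hx : IsLiftEnumeration Y N x)
    (hw : ∀ i, (d : ℝ) * x i = x (i + k) + w i) :
    ∑ j ∈ Finset.range N, (w (j + 1) - w j) = d - 1 := by
  have := Finset.sum_range_sub (fun j : ℕ => w j) N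
  push_cast at this
  rw [this, ← zero_add (N : ℤ), hx.defect_add_period hw]
  ring

theorem IsLiftEnumeration.card_filter_jump_ne_zero_le (hx : IsLiftEnumeration Y N x)
    (hw : ∀ i, (d : ℝ) * x i = x (i + k) + w i) (hd : 0 < d) :
    ((Finset.range N).filter fun j : ℕ => w (j + 1) - w j ≠ 0).card ≤ d - 1 := by
  set J := (Finset.range N).filter fun j : ℕ => w (j + 1) - w j ≠ 0
  have hnonneg : ∀ j : ℕ, 0 ≤ w (j + 1) - w j := fun j => hx.jump_nonneg hw hd j
  have hle : (J.card : ℤ) ≤ d - 1 := calc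
    (J.card : ℤ) = J.card • 1 := by simp
    _ ≤ ∑ j ∈ J, (w (j + 1) - w j) :=
        J.card_nsmul_le_sum _ _ fun j hj => by
          have := hnonneg j
          simp only [J, Finset.mem_filter] at hj
          omega
    _ ≤ ∑ j ∈ Finset.range N, (w (j + 1) - w j) :=
        Finset.sum_le_sum_of_subset_of_nonneg (Finset.filter_subset _ _) fun j _ _ => hnonneg j
    _ = d - 1 := hx.sum_range_jump hw
  omega

theorem IsLiftEnumeration.exists_jump_ne_zero (hx : IsLiftEnumeration Y N x)
    (hw : ∀ i, (d : ℝ) * x i = x (i + k) + w i) (hd : d ≠ 1) {C : Set Circle1}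
    (hC : MapsTo (md d) C C) {i : ℤ} (hi : ((x i : ℝ) : Circle1) ∈ C) :
    ∃ j : ℕ, j < N ∧ ((x j : ℝ) : Circle1) ∈ C ∧ w (j + 1) - w j ≠ 0 := by
  have hP : Function.Periodic (fun i => ((x i : ℝ) : Circle1) ∈ C ∧ w (i + 1) - w i ≠ 0) N :=
    fun i => by simp only [hx.periodic_coe i, hx.periodic_jump hw i]
  obtain ⟨i₀, hi₀⟩ : ∃ i, ((x i : ℝ) : Circle1) ∈ C ∧ w (i + 1) - w i ≠ 0 := by
    by_contra! hzero
    have hstep : ∀ i, ((x i : ℝ) : Circle1) ∈ C → ((x (i + k) : ℝ) : Circle1) ∈ C ∧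
        x (i + k + 1) - x (i + k) = d * (x (i + 1) - x i) := fun i hi => by
      refine ⟨coe_add_shift hw i ▸ hC hi, ?_⟩
      have := jump_eq hw i
      rw [hzero i hi, Int.cast_zero] at this
      linarith
    have hiter : ∀ m : ℕ, ((x (i + m * k) : ℝ) : Circle1) ∈ C ∧
        x (i + m * k + 1) - x (i + m * k) = d ^ m * (x (i + 1) - x i) := fun m => by
      induction m with
      | zero => simpa using hi
      | succ m ih =>
        obtain ⟨hC', hgap⟩ := hstep _ ih.1
        rw [Nat.cast_succ, add_one_mul, ← add_assoc, pow_succ, hgap, ih.2]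
        exact ⟨hC', by ring⟩
    have hper : x (i + k * N + 1) - x (i + k * N) = x (i + 1) - x i :=
      hx.periodic_gap.int_mul k i
    rw [mul_comm, (hiter N).2] at hper
    have hdN : d ^ N = 1 := by
      exact_mod_cast mul_right_cancel₀ (hx.gap_pos i).ne' (hper.trans (one_mul _).symm)
    exact hd ((Nat.pow_eq_one.mp hdN).resolve_right hx.period_pos.ne')
  exact hP.exists_natCast_lt hx.period_pos hi₀

end Jumps

namespace IsPeriodicOrbit

variable {d : ℕ} {C : Set Circle1}

theorem nonempty (hC : IsPeriodicOrbit d C) : C.Nonempty := by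
  obtain ⟨t, n, hn, -, rfl⟩ := hC
  exact ⟨t, ⟨⟨0, hn⟩, rfl⟩⟩

theorem finite (hC : IsPeriodicOrbit d C) : C.Finite := by
  obtain ⟨t, n, -, -, rfl⟩ := hC
  exact finite_range _

theorem subset_periodicPts (hC : IsPeriodicOrbit d C) : C ⊆ Function.periodicPts (md d) := by
  obtain ⟨t, n, hn, ht, rfl⟩ := hC
  rintro _ ⟨k, rfl⟩
  exact Function.mk_mem_periodicPts hn (Function.IsPeriodicPt.apply_iterate ht k)

theorem mapsTo (hC : IsPeriodicOrbit d C) : MapsTo (md d) C C := by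
  obtain ⟨t, n, hn, ht, rfl⟩ := hC
  rintro _ ⟨k, rfl⟩
  refine ⟨⟨(k + 1) % n, Nat.mod_lt _ hn⟩, ?_⟩
  dsimp only
  rw [Function.IsPeriodicPt.iterate_mod_apply ht, Function.iterate_succ_apply']

theorem eq_range_iterate (hC : IsPeriodicOrbit d C) {s : Circle1} (hs : s ∈ C) :
    C = range fun m : ℕ => (md d)^[m] s := by
  refine Subset.antisymm ?_ (range_subset_iff.mpr fun m => hC.mapsTo.iterate m hs)
  obtain ⟨t, n, hn, ht, rfl⟩ := hC
  obtain ⟨⟨i, hi⟩, rfl⟩ := hs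
  rintro _ ⟨⟨j, -⟩, rfl⟩
  refine ⟨j + (n - i), ?_⟩
  dsimp only
  rw [← Function.iterate_add_apply, show j + (n - i) + i = j + n by omega,
    Function.iterate_add_apply, ht]

theorem eq_of_mem_of_mem {C' : Set Circle1} (hC : IsPeriodicOrbit d C)
    (hC' : IsPeriodicOrbit d C') {s : Circle1} (hs : s ∈ C) (hs' : s ∈ C') : C = C' :=
  (hC.eq_range_iterate hs).trans (hC'.eq_range_iterate hs').symm

end IsPeriodicOrbit

theorem bijOn_md_sUnion_of_isPeriodicOrbit {d : ℕ} {S : Finset (Set Circle1)}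
    (hS : ∀ C ∈ S, IsPeriodicOrbit d C) :
    BijOn (md d) (⋃₀ (S : Set (Set Circle1))) (⋃₀ (S : Set (Set Circle1))) := by
  refine (Finite.injOn_iff_bijOn_of_mapsTo (S.finite_toSet.sUnion fun C hC => (hS C hC).finite)
    fun t ⟨C, hC, ht⟩ => ⟨C, hC, (hS C hC).mapsTo ht⟩).mp ?_
  exact (Function.bijOn_periodicPts _).injOn.mono fun t ⟨C, hC, ht⟩ =>
    (hS C hC).subset_periodicPts ht

theorem IsRotationSet.card_le_of_isPeriodicOrbit {d : ℕ} (hd : 1 < d) {X : Set Circle1}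
    (hX : IsRotationSet d X) (S : Finset (Set Circle1))
    (hS : ∀ C ∈ S, IsPeriodicOrbit d C ∧ C ⊆ X) : S.card ≤ d - 1 := by
  obtain ⟨-, -, -, g, ⟨G, hG⟩, hgX⟩ := hX
  rcases S.eq_empty_or_nonempty with rfl | ⟨C₀, hC₀⟩
  · simp
  set Y := ⋃₀ (S : Set (Set Circle1))
  have hYX : Y ⊆ X := sUnion_subset fun C hC => (hS C hC).2
  have hgY : BijOn g Y Y := (bijOn_md_sUnion_of_isPeriodicOrbit fun C hC => (hS C hC).1).congr
    fun t ht => (hgX t (hYX ht)).symm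
  obtain ⟨N, x, hx⟩ := exists_isLiftEnumeration
    (S.finite_toSet.sUnion fun C hC => (hS C hC).1.finite)
    ((hS C₀ hC₀).1.nonempty.mono (subset_sUnion_of_mem hC₀))
  obtain ⟨k, hk⟩ := hx.exists_shift hG hgY
  choose w hw using fun i => circle_coe_eq_coe_iff.mp <|
    show ((x (i + k) : ℝ) : Circle1) = ((d * x i : ℝ) : Circle1) by
      rw [← hk i, ← hG, hgX _ (hYX (hx.coe_mem i)), md_coe]
  have hjump : ∀ C ∈ S, ∃ j : ℕ, j < N ∧ ((x j : ℝ) : Circle1) ∈ C ∧ w (j + 1) - w j ≠ 0 :=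
    fun C hC => by
      obtain ⟨t, ht⟩ := (hS C hC).1.nonempty
      obtain ⟨r, rfl⟩ := QuotientAddGroup.mk_surjective t
      obtain ⟨i, rfl⟩ := hx.exists_eq ⟨C, hC, ht⟩
      exact hx.exists_jump_ne_zero hw hd.ne' (hS C hC).1.mapsTo ht
  choose! j hjN hjC hj0 using hjump
  calc S.card ≤ ((Finset.range N).filter fun j : ℕ => w (j + 1) - w j ≠ 0).card :=
        Finset.card_le_card_of_injOn j (fun C hC => by simp [hjN C hC, hj0 C hC])
          fun C hC C' hC' h => (hS C hC).1.eq_of_mem_of_mem (hS C' hC').1 (hjC C hC)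
            (h ▸ hjC C' hC')
    _ ≤ d - 1 := hx.card_filter_jump_ne_zero_le hw (by omega)

/-- A rotation set for `m_3` contains at most two distinct periodic
orbits of `m_3`. -/
theorem at_most_two_cycles_in_m3_rotation_set
    (X : Set Circle1) (hX : IsRotationSet 3 X)
    (C₁ C₂ C₃ : Set Circle1)
    (h₁ : IsPeriodicOrbit 3 C₁) (h₂ : IsPeriodicOrbit 3 C₂) (h₃ : IsPeriodicOrbit 3 C₃)
    (hs₁ : C₁ ⊆ X) (hs₂ : C₂ ⊆ X) (hs₃ : C₃ ⊆ X) :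
    ¬(C₁ ≠ C₂ ∧ C₁ ≠ C₃ ∧ C₂ ≠ C₃) := by
  classical
  rintro ⟨h12, h13, h23⟩
  have hcard := hX.card_le_of_isPeriodicOrbit (by norm_num) {C₁, C₂, C₃} <| by
    simp only [Finset.mem_insert, Finset.mem_singleton]
    rintro C (rfl | rfl | rfl)
    exacts [⟨h₁, hs₁⟩, ⟨h₂, hs₂⟩, ⟨h₃, hs₃⟩]
  rw [Finset.card_eq_three.mpr ⟨C₁, C₂, C₃, h12, h13, h23, rfl⟩] at hcard
  omega
end
end
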